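/- Let S and S′ be stretches with S′ > S and d(S,S′) = 1. Then S is down-admissible for v and S′ is down-admissible for v[S] if and only if S′ is down-admissible for v and S is up-admissible for v[S′]. In this case v[S][S′] = v[S′](S). -/

import Mathlib

namespace SL2Tilt

/-- The `i`-th `p`-adic digit of `v`. -/
def dig (p v i : ℕ) : ℕ := v / p ^ i % p

/-- A stretch: a nonempty finite set of consecutive integers. -/
def IsStretch (S : Finset ℕ) : Prop :=
  S.Nonempty ∧ ∀ a ∈ S, ∀ b ∈ S, ∀ c, a ≤ c → c ≤ b → c ∈ S

/-- `S` is down-admissible for `v` (with respect to the prime `p`):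
(d1) the digit of `v` at the minimum of each maximal stretch of `S` is nonzero, and
(d2) if `s ∈ S` and the `(s+1)`-st digit is `0`, then `s + 1 ∈ S`. -/
def DownAdm (p v : ℕ) (S : Finset ℕ) : Prop :=
  (∀ s ∈ S, (s = 0 ∨ s - 1 ∉ S) → dig p v s ≠ 0) ∧
  (∀ s ∈ S, dig p v (s + 1) = 0 → s + 1 ∈ S)

/-- `S` is up-admissible for `v` (with respect to the prime `p`):
(u1) the digit of `v` at the minimum of each maximal stretch of `S` is nonzero, and
(u2) if `s ∈ S` and the `(s+1)`-st digit is `p - 1`, then `s + 1 ∈ S`. -/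
def UpAdm (p v : ℕ) (S : Finset ℕ) : Prop :=
  (∀ s ∈ S, (s = 0 ∨ s - 1 ∉ S) → dig p v s ≠ 0) ∧
  (∀ s ∈ S, dig p v (s + 1) = p - 1 → s + 1 ∈ S)

/-- `v[S] = ∑ᵢ εᵢ aᵢ pⁱ` (εᵢ = -1 for i ∈ S, else 1), as an integer.
All nonzero digits of `v` have index `< v`, so the range `Finset.range v ∪ S` suffices. -/
def vdown (p v : ℕ) (S : Finset ℕ) : ℤ :=
  ∑ i ∈ Finset.range v ∪ S,
    (if i ∈ S then (-1 : ℤ) else 1) * (dig p v i : ℤ) * (p : ℤ) ^ i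

/-- `v(S) = ∑ᵢ aᵢ' pⁱ` where `aᵢ' = -aᵢ` if `i ∈ S`, `aᵢ' = aᵢ + 2` if `i ∉ S` and
`i - 1 ∈ S`, and `aᵢ' = aᵢ` otherwise; as an integer. -/
def vup (p v : ℕ) (S : Finset ℕ) : ℤ :=
  ∑ i ∈ Finset.range v ∪ S ∪ S.image (· + 1),
    (if i ∈ S then -(dig p v i : ℤ)
      else if i - 1 ∈ S then (dig p v i : ℤ) + 2
      else (dig p v i : ℤ)) * (p : ℤ) ^ i

/-- `v[S]` as a natural number. -/
def vdownN (p v : ℕ) (S : Finset ℕ) : ℕ := (vdown p v S).toNat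

/-- `v(S)` as a natural number. -/
def vupN (p v : ℕ) (S : Finset ℕ) : ℕ := (vup p v S).toNat

/-- `fancest' p v s` is `v` with the `p`-adic digits in positions `< s` set to zero.
This is the ancestor `fancest_{s-1}(v)` of the paper: the youngest ancestor of `v`
whose `(s-1)`-st digit is zero (with `fancest' p v 0 = fancest_{-1}(v) = v`). -/
def fancest' (p v s : ℕ) : ℕ := p ^ s * (v / p ^ s)

/-- The scalar `λ_{v,S} = ∏_{s ∈ S} (-1)^(a_s p^s) · fancest_{s-1}(v)[S]± / fancest_s(v)[S]±`. -/
def lam (p v : ℕ) (S : Finset ℕ) : ℚ :=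
  ∏ s ∈ S,
    (-1 : ℚ) ^ (dig p v s * p ^ s) *
      ((vdown p (fancest' p v s) S : ℚ) / (vdown p (fancest' p v (s + 1)) S : ℚ))

/-- The generation of `v` : the number of (matrilineal) ancestors of `v`, i.e. the
number of nonzero `p`-adic digits of `v` minus one. -/
def gen (p v : ℕ) : ℕ :=
  ((Finset.range v).filter (fun i => dig p v i ≠ 0)).card - 1

/-- A minimal down-admissible stretch for `v`: a down-admissible stretch, no proper
nonempty subset of which is down-admissible for `v`. -/
def MinDownStretch (p v : ℕ) (S : Finset ℕ) : Prop :=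
  DownAdm p v S ∧ IsStretch S ∧ ∀ T ⊂ S, T.Nonempty → ¬ DownAdm p v T

/-- A minimal up-admissible stretch for `v`. -/
def MinUpStretch (p v : ℕ) (S : Finset ℕ) : Prop :=
  UpAdm p v S ∧ IsStretch S ∧ ∀ T ⊂ S, T.Nonempty → ¬ UpAdm p v T

/-- `A` and `B` are distant: `d(A,B) > 1`, i.e. `|a - b| > 1` for all `a ∈ A`, `b ∈ B`. -/
def Distant (A B : Finset ℕ) : Prop :=
  ∀ a ∈ A, ∀ b ∈ B, a + 1 < b ∨ b + 1 < a


section Lemmas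
variable {p : ℕ} (hp2 : 2 ≤ p)

include hp2 in
lemma dig_lt (v i : ℕ) : dig p v i < p := Nat.mod_lt _ (by omega)

include hp2 in
lemma dig_eq_zero {v i : ℕ} (h : v ≤ i) : dig p v i = 0 := by
  have : v < p ^ i := lt_of_lt_of_le (lt_of_le_of_lt h (Nat.lt_two_pow_self (n := i)))
    (Nat.pow_le_pow_left hp2 i)
  simp [dig, Nat.div_eq_of_lt this]

lemma sum_range_dig (v N : ℕ) : ∑ i ∈ Finset.range N, dig p v i * p ^ i = v % p ^ N := by
  induction N with
  | zero => simp [Nat.mod_one]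
  | succ N ih => rw [Finset.sum_range_succ, ih, Nat.mod_pow_succ]; ring_nf; rfl

include hp2 in
lemma sum_dig_eq {v : ℕ} {T : Finset ℕ} (h : Finset.range v ⊆ T) :
    ∑ i ∈ T, dig p v i * p ^ i = v := by
  rw [← Finset.sum_subset h (fun x _ hx => by
    rw [dig_eq_zero hp2 (by simpa using hx)]; ring)]
  rw [sum_range_dig]
  exact Nat.mod_eq_of_lt (lt_of_lt_of_le (Nat.lt_two_pow_self (n := v)) (Nat.pow_le_pow_left hp2 v))

include hp2 in
lemma vdown_eq (v : ℕ) (S : Finset ℕ) :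
    vdown p v S = (v : ℤ) - 2 * ∑ i ∈ S, (dig p v i : ℤ) * (p : ℤ) ^ i := by
  have h1 : ∀ i ∈ Finset.range v ∪ S,
      (if i ∈ S then (-1 : ℤ) else 1) * (dig p v i : ℤ) * (p : ℤ) ^ i
        = (dig p v i : ℤ) * (p : ℤ) ^ i
          - 2 * (if i ∈ S then (dig p v i : ℤ) * (p : ℤ) ^ i else 0) := by
    intro i _; split <;> ring
  rw [vdown, Finset.sum_congr rfl h1, Finset.sum_sub_distrib, ← Finset.mul_sum,
    ← Finset.sum_filter]
  have h2 : (Finset.range v ∪ S).filter (· ∈ S) = S := by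
    rw [Finset.filter_mem_eq_inter, Finset.union_inter_cancel_right]
  have h3 : ∑ i ∈ Finset.range v ∪ S, (dig p v i : ℤ) * (p : ℤ) ^ i = (v : ℤ) := by
    have := sum_dig_eq hp2 (v := v) (T := Finset.range v ∪ S) Finset.subset_union_left
    exact_mod_cast this
  rw [h2, h3]

include hp2 in
lemma vup_eq (v m n : ℕ) (hmn : m ≤ n) :
    vup p v (Finset.Icc m n) = (v : ℤ)
      - 2 * ∑ i ∈ Finset.Icc m n, (dig p v i : ℤ) * (p : ℤ) ^ i + 2 * (p : ℤ) ^ (n + 1) := by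
  set S := Finset.Icc m n with hS
  set T := Finset.range v ∪ S ∪ S.image (· + 1) with hT
  have hmem : n + 1 ∈ T :=
    Finset.mem_union_right _ (Finset.mem_image.2 ⟨n, by simp [hS, hmn], rfl⟩)
  have h1 : ∀ i ∈ T,
      (if i ∈ S then -(dig p v i : ℤ)
        else if i - 1 ∈ S then (dig p v i : ℤ) + 2
        else (dig p v i : ℤ)) * (p : ℤ) ^ i
      = (dig p v i : ℤ) * (p : ℤ) ^ i
        - 2 * (if i ∈ S then (dig p v i : ℤ) * (p : ℤ) ^ i else 0)
        + (if i = n + 1 then 2 * (p:ℤ) ^ i else 0) := by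
    intro i _
    by_cases h : i ∈ S
    · have h2 : i ≠ n + 1 := by simp only [hS, Finset.mem_Icc] at h ⊢; omega
      rw [if_pos h, if_pos h, if_neg h2]; ring
    · by_cases h2 : i = n + 1
      · have h3 : i - 1 ∈ S := by simp only [hS, Finset.mem_Icc, h2]; omega
        rw [if_neg h, if_pos h3, if_neg h, if_pos h2]; ring
      · have h3 : i - 1 ∉ S := by
          simp only [hS, Finset.mem_Icc] at h ⊢; omega
        rw [if_neg h, if_neg h3, if_neg h, if_neg h2]; ring
  rw [vup, Finset.sum_congr rfl h1]
  rw [Finset.sum_add_distrib, Finset.sum_sub_distrib, ← Finset.mul_sum, ← Finset.sum_filter,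
    ← Finset.sum_filter]
  have h2 : T.filter (· ∈ S) = S := by
    have : T = (Finset.range v ∪ S.image (· + 1)) ∪ S := by
      rw [hT]; ac_rfl
    rw [this, Finset.filter_mem_eq_inter, Finset.union_inter_cancel_right]
  have h4 : T.filter (· = n + 1) = {n + 1} := by
    rw [Finset.filter_eq', if_pos hmem]
  have h3 : ∑ i ∈ T, (dig p v i : ℤ) * (p : ℤ) ^ i = (v : ℤ) := by
    have := sum_dig_eq hp2 (v := v) (T := T)
      (le_trans Finset.subset_union_left Finset.subset_union_left)
    exact_mod_cast this
  rw [h2, h3, h4, Finset.sum_singleton]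

-- digit helpers


include hp2 in
lemma dig_add_high (z e i : ℕ) : dig p (z + p ^ (i + 1) * e) i = dig p z i := by
  have h : p ^ (i + 1) * e = p ^ i * (p * e) := by ring
  rw [dig, h, Nat.add_mul_div_left _ _ (pow_pos (by omega) i),
    Nat.add_mul_mod_self_left]
  rfl

include hp2 in
lemma dig_high {x y : ℕ} (N i : ℕ) (hx : x < p ^ N) (hi : N ≤ i) :
    dig p (x + p ^ N * y) i = dig p y (i - N) := by
  have hpN : 0 < p ^ N := pow_pos (by omega) N
  have h1 : (x + p ^ N * y) / p ^ i = (x + p ^ N * y) / p ^ N / p ^ (i - N) := by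
    rw [Nat.div_div_eq_div_mul, ← pow_add]
    congr 2
    omega
  rw [dig, h1, Nat.add_mul_div_left _ _ hpN, Nat.div_eq_of_lt hx, Nat.zero_add]
  rfl

lemma div_pred {x q : ℕ} (h : x % q ≠ 0) : (x - 1) / q = x / q := by
  rcases Nat.eq_zero_or_pos q with hq | hq
  · subst hq; simp
  have h1 := Nat.div_add_mod x q
  have h2 : x - 1 = (x % q - 1) + q * (x / q) := by omega
  rw [h2, Nat.add_mul_div_left _ _ hq,
    Nat.div_eq_of_lt (by have := Nat.mod_lt x hq; omega), Nat.zero_add]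

lemma mod_pred {x q : ℕ} (h : x % q ≠ 0) : (x - 1) % q = x % q - 1 := by
  rcases Nat.eq_zero_or_pos q with hq | hq
  · subst hq; simp
  have h1 := Nat.div_add_mod x q
  have h2 : x - 1 = (x % q - 1) + q * (x / q) := by omega
  rw [h2, Nat.add_mul_mod_self_left,
    Nat.mod_eq_of_lt (by have := Nat.mod_lt x hq; omega)]

lemma dig_pred {x : ℕ} (hx : x % p ≠ 0) (j : ℕ) (hj : 1 ≤ j) :
    dig p (x - 1) j = dig p x j := by
  have h1 : p ^ j = p * p ^ (j - 1) := by
    conv_rhs => rw [← pow_succ']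
    congr 1; omega
  rw [dig, dig, h1, ← Nat.div_div_eq_div_mul, ← Nat.div_div_eq_div_mul, div_pred hx]

include hp2 in
lemma master {v m n : ℕ} (hmn : m ≤ n) (ham : dig p v m ≠ 0) (han : dig p v (n + 1) ≠ 0) :
    2 * (∑ i ∈ Finset.Icc m n, dig p v i * p ^ i) ≤ v
    ∧ (∀ i, i < m →
        dig p (v - 2 * ∑ j ∈ Finset.Icc m n, dig p v j * p ^ j) i = dig p v i)
    ∧ dig p (v - 2 * ∑ j ∈ Finset.Icc m n, dig p v j * p ^ j) m = p - dig p v m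
    ∧ dig p (v - 2 * ∑ j ∈ Finset.Icc m n, dig p v j * p ^ j) (n + 1)
        = dig p v (n + 1) - 1
    ∧ (∀ i, n + 2 ≤ i →
        dig p (v - 2 * ∑ j ∈ Finset.Icc m n, dig p v j * p ^ j) i = dig p v i) := by
  have hpm : 0 < p ^ m := pow_pos (by omega) m
  have hpn1 : 0 < p ^ (n + 1) := pow_pos (by omega) (n + 1)
  set D := ∑ j ∈ Finset.Icc m n, dig p v j * p ^ j with hD
  clear_value D
  have hdvdD : ∀ N, N ≤ m → p ^ N ∣ D := by
    intro N hN
    rw [hD]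
    exact Finset.dvd_sum fun j hj => Dvd.dvd.mul_left
      (pow_dvd_pow p (le_trans hN (Finset.mem_Icc.1 hj).1)) _
  have hF2 : v % p ^ m + D = v % p ^ (n + 1) := by
    rw [← sum_range_dig v m, ← sum_range_dig v (n + 1), hD,
      Finset.range_eq_Ico, Finset.range_eq_Ico, ← Finset.Ico_add_one_right_eq_Icc]
    exact Finset.sum_Ico_consecutive _ (by omega) (by omega)
  have hF3 : p ^ m ≤ D := by
    rw [hD]
    calc p ^ m ≤ dig p v m * p ^ m := Nat.le_mul_of_pos_left _ (by omega)
    _ ≤ _ := Finset.single_le_sum (f := fun i => dig p v i * p ^ i)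
        (fun i _ => Nat.zero_le _) (Finset.mem_Icc.2 ⟨le_rfl, hmn⟩)
  set hi := v / p ^ (n + 1) with hhi
  have hdign : dig p v (n + 1) = hi % p := rfl
  have hF6 : v = v % p ^ (n + 1) + p ^ (n + 1) * hi := (Nat.mod_add_div v (p ^ (n + 1))).symm
  set lo := v % p ^ m with hlo'
  have hlo : lo < p ^ m := Nat.mod_lt v hpm
  set lon := v % p ^ (n + 1) with hlon'
  have hlon : lon < p ^ (n + 1) := Nat.mod_lt v hpn1
  clear_value hi lo lon
  have hF4 : D < p ^ (n + 1) := by omega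
  have hhi1 : 1 ≤ hi := by
    rcases Nat.eq_zero_or_pos hi with h0 | h0
    · rw [hdign, h0, Nat.zero_mod] at han
      exact absurd rfl han
    · exact h0
  have hmul : p ^ (n + 1) * (hi - 1) + p ^ (n + 1) = p ^ (n + 1) * hi := by
    rw [← Nat.mul_succ]
    congr 1
    omega
  have h2D : 2 * D ≤ v := by omega
  set r := lo + (p ^ (n + 1) - D) with hr
  clear_value r
  have hw : v - 2 * D = r + p ^ (n + 1) * (hi - 1) := by omega
  have hrlt : r < p ^ (n + 1) := by omega
  refine ⟨h2D, ?_, ?_, ?_, ?_⟩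
  · -- digits below m unchanged
    intro i him
    obtain ⟨e, he⟩ : p ^ (i + 1) ∣ 2 * D := Dvd.dvd.mul_left (hdvdD (i + 1) (by omega)) 2
    have hv' : v = (v - 2 * D) + p ^ (i + 1) * e := by omega
    conv_rhs => rw [hv', dig_add_high hp2]
  · -- digit at m
    rw [hw]
    have hsplit : p ^ (n + 1) * (hi - 1) = p ^ (m + 1) * (p ^ (n - m) * (hi - 1)) := by
      rw [← mul_assoc, ← pow_add]
      congr 2
      omega
    rw [hsplit, dig_add_high hp2]
    obtain ⟨E, hE⟩ : p ^ m ∣ p ^ (n + 1) - D :=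
      Nat.dvd_sub (pow_dvd_pow p (by omega)) (hdvdD m le_rfl)
    rw [hr, hE, dig, Nat.add_mul_div_left _ _ hpm, Nat.div_eq_of_lt hlo, Nat.zero_add]
    -- compute E % p
    have hIcc : Finset.Icc m n = insert m (Finset.Icc (m + 1) n) := by
      ext x
      simp only [Finset.mem_Icc, Finset.mem_insert]
      omega
    have hmem : m ∉ Finset.Icc (m + 1) n := by simp
    have hsplit2 : D = dig p v m * p ^ m + ∑ j ∈ Finset.Icc (m + 1) n, dig p v j * p ^ j := by
      rw [hD, hIcc, Finset.sum_insert hmem]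
    obtain ⟨e₂, he₂⟩ : p ^ (m + 1) ∣ ∑ j ∈ Finset.Icc (m + 1) n, dig p v j * p ^ j :=
      Finset.dvd_sum fun j hj => Dvd.dvd.mul_left
        (pow_dvd_pow p (Finset.mem_Icc.1 hj).1) _
    have hEq : p ^ m * (dig p v m + p * e₂ + E) = p ^ m * p ^ (n + 1 - m) := by
      have h2 : p ^ m * p ^ (n + 1 - m) = p ^ (n + 1) := by
        rw [← pow_add]
        congr 1
        omega
      have h3 : p ^ (m + 1) * e₂ = p ^ m * (p * e₂) := by ring
      have h4 : p ^ m * dig p v m = dig p v m * p ^ m := by ring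
      rw [h2, Nat.mul_add, Nat.mul_add, h4, ← h3]
      omega
    have hEq2 : dig p v m + p * e₂ + E = p ^ (n + 1 - m) :=
      Nat.eq_of_mul_eq_mul_left hpm hEq
    have hf1 : 1 ≤ dig p v m := by omega
    have hfp : dig p v m < p := dig_lt hp2 v m
    have hpn1m : p ^ (n + 1 - m) = p * p ^ (n - m) := by
      rw [← pow_succ']
      congr 1
      omega
    obtain ⟨c, hc⟩ : ∃ c, E + dig p v m = p * c := by
      refine ⟨p ^ (n - m) - e₂, ?_⟩
      rw [Nat.mul_sub]
      omega
    have hc1 : 1 ≤ c := by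
      by_contra hcc
      have : c = 0 := by omega
      rw [this, Nat.mul_zero] at hc
      omega
    have hple : p ≤ p * c := Nat.le_mul_of_pos_right p (by omega)
    have hcm : p * (c - 1) + p = p * c := by
      rw [← Nat.mul_succ]
      congr 1
      omega
    have hEexp : E = (p - dig p v m) + p * (c - 1) := by omega
    rw [hEexp, Nat.add_mul_mod_self_left, Nat.mod_eq_of_lt (by omega)]
  · -- digit at n + 1
    rw [hw, dig_high hp2 (n + 1) (n + 1) hrlt le_rfl, Nat.sub_self, dig, pow_zero,
      Nat.div_one, hdign, mod_pred (by rw [hdign] at han; exact han)]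
  · -- digits above n + 1
    intro i hni
    rw [hw, dig_high hp2 (n + 1) i hrlt (by omega)]
    have hv' : dig p v i = dig p hi (i - (n + 1)) := by
      conv_lhs => rw [hF6]
      rw [dig_high hp2 (n + 1) i hlon (by omega)]
    rw [hv', dig_pred (by rw [hdign] at han; exact han) (i - (n + 1)) (by omega)]

lemma downAdm_Icc {v m n : ℕ} (hmn : m ≤ n) :
    DownAdm p v (Finset.Icc m n) ↔ dig p v m ≠ 0 ∧ dig p v (n + 1) ≠ 0 := by
  constructor
  · rintro ⟨h1, h2⟩
    refine ⟨h1 m (Finset.mem_Icc.2 ⟨le_rfl, hmn⟩) ?_, ?_⟩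
    · rcases Nat.eq_zero_or_pos m with h0 | h0
      · exact Or.inl h0
      · right
        rw [Finset.mem_Icc]
        omega
    · intro h0
      have := h2 n (Finset.mem_Icc.2 ⟨hmn, le_rfl⟩) h0
      rw [Finset.mem_Icc] at this
      omega
  · rintro ⟨h1, h2⟩
    constructor
    · intro s hs hcond
      rw [Finset.mem_Icc] at hs
      have hsm : s = m := by
        rcases hcond with h | h
        · omega
        · rw [Finset.mem_Icc] at h
          omega
      rwa [hsm]
    · intro s hs h0
      rw [Finset.mem_Icc] at hs ⊢
      rcases eq_or_lt_of_le hs.2 with he | hlts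
      · exact absurd (he ▸ h0) h2
      · omega

lemma upAdm_Icc {v m n : ℕ} (hmn : m ≤ n) :
    UpAdm p v (Finset.Icc m n) ↔ dig p v m ≠ 0 ∧ dig p v (n + 1) ≠ p - 1 := by
  constructor
  · rintro ⟨h1, h2⟩
    refine ⟨h1 m (Finset.mem_Icc.2 ⟨le_rfl, hmn⟩) ?_, ?_⟩
    · rcases Nat.eq_zero_or_pos m with h0 | h0
      · exact Or.inl h0
      · right
        rw [Finset.mem_Icc]
        omega
    · intro h0
      have := h2 n (Finset.mem_Icc.2 ⟨hmn, le_rfl⟩) h0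
      rw [Finset.mem_Icc] at this
      omega
  · rintro ⟨h1, h2⟩
    constructor
    · intro s hs hcond
      rw [Finset.mem_Icc] at hs
      have hsm : s = m := by
        rcases hcond with h | h
        · omega
        · rw [Finset.mem_Icc] at h
          omega
      rwa [hsm]
    · intro s hs h0
      rw [Finset.mem_Icc] at hs ⊢
      rcases eq_or_lt_of_le hs.2 with he | hlts
      · exact absurd (he ▸ h0) h2
      · omega

lemma stretch_eq_Icc (S : Finset ℕ) (h : IsStretch S) :
    S = Finset.Icc (S.min' h.1) (S.max' h.1) := by
  ext x
  rw [Finset.mem_Icc]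
  constructor
  · intro hx
    exact ⟨S.min'_le x hx, S.le_max' x hx⟩
  · rintro ⟨h1, h2⟩
    exact h.2 _ (S.min'_mem h.1) _ (S.max'_mem h.1) x h1 h2

include hp2 in
lemma vdownN_eq {v : ℕ} (S : Finset ℕ) (h : 2 * (∑ i ∈ S, dig p v i * p ^ i) ≤ v) :
    vdownN p v S = v - 2 * ∑ i ∈ S, dig p v i * p ^ i := by
  have hc : (∑ i ∈ S, (dig p v i : ℤ) * (p : ℤ) ^ i)
      = ((∑ i ∈ S, dig p v i * p ^ i : ℕ) : ℤ) := by
    push_cast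
    rfl
  rw [vdownN, vdown_eq hp2, hc]
  omega

end Lemmas

/-- For adjacent stretches `S' > S`: `S` is down-admissible for `v` and `S'` is
down-admissible for `v[S]` iff `S'` is down-admissible for `v` and `S` is
up-admissible for `v[S']`; in this case `v[S][S'] = v[S'](S)`. -/
theorem stmt2 (p v : ℕ) (hp : p.Prime) (hv : 1 ≤ v) (S S' : Finset ℕ)
    (hS : IsStretch S) (hS' : IsStretch S')
    (hlt : ∀ a ∈ S, ∀ b ∈ S', a < b)
    (hadj : ∃ a ∈ S, a + 1 ∈ S') :
    ((DownAdm p v S ∧ DownAdm p (vdownN p v S) S') ↔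
      (DownAdm p v S' ∧ UpAdm p (vdownN p v S') S)) ∧
    ((DownAdm p v S ∧ DownAdm p (vdownN p v S) S') →
      vdownN p (vdownN p v S) S' = vupN p (vdownN p v S') S) := by
  have hp2 : 2 ≤ p := hp.two_le
  obtain ⟨a, haS, haS'⟩ := hadj
  have hminmax : S'.min' hS'.1 = S.max' hS.1 + 1 := by
    have h1 := hlt _ (S.max'_mem hS.1) _ (S'.min'_mem hS'.1)
    have h2 := Finset.min'_le _ _ haS'
    have h3 := S.le_max' a haS
    have h4 := hlt a haS _ (S'.min'_mem hS'.1)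
    omega
  rw [stretch_eq_Icc S hS, stretch_eq_Icc S' hS', hminmax]
  set m := S.min' hS.1 with hmdef
  set n := S.max' hS.1 with hndef
  set k := S'.max' hS'.1 with hkdef
  have hmn : m ≤ n := S.min'_le _ (S.max'_mem hS.1)
  have hn1k : n + 1 ≤ k := by
    have h5 := S'.min'_le _ (S'.max'_mem hS'.1)
    omega
  clear_value m n k
  clear hminmax haS haS' hlt hv hS hS' hmdef hndef hkdef
  -- forward direction data
  have fwd : (DownAdm p v (Finset.Icc m n)
        ∧ DownAdm p (vdownN p v (Finset.Icc m n)) (Finset.Icc (n + 1) k)) →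
      dig p v m ≠ 0 ∧ 2 ≤ dig p v (n + 1) ∧ dig p v (k + 1) ≠ 0 := by
    rintro ⟨hdS, hdS'⟩
    rw [downAdm_Icc hmn] at hdS
    obtain ⟨ham, han1⟩ := hdS
    obtain ⟨h2D, -, -, hatn1, habove⟩ := master hp2 hmn ham han1
    rw [vdownN_eq hp2 _ h2D, downAdm_Icc hn1k] at hdS'
    obtain ⟨hw1, hw2⟩ := hdS'
    rw [hatn1] at hw1
    rw [habove (k + 1) (by omega)] at hw2
    have := dig_lt hp2 v (n + 1)
    exact ⟨ham, by omega, hw2⟩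
  have bwd : (DownAdm p v (Finset.Icc (n + 1) k)
        ∧ UpAdm p (vdownN p v (Finset.Icc (n + 1) k)) (Finset.Icc m n)) →
      dig p v m ≠ 0 ∧ 2 ≤ dig p v (n + 1) ∧ dig p v (k + 1) ≠ 0 := by
    rintro ⟨hdS', huS⟩
    rw [downAdm_Icc hn1k] at hdS'
    obtain ⟨han1, hak1⟩ := hdS'
    obtain ⟨h2D', hbelow', hatm', -, -⟩ := master hp2 hn1k han1 hak1
    rw [vdownN_eq hp2 _ h2D', upAdm_Icc hmn] at huS
    obtain ⟨hu1, hu2⟩ := huS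
    rw [hbelow' m (by omega)] at hu1
    rw [hatm'] at hu2
    have := dig_lt hp2 v (n + 1)
    exact ⟨hu1, by omega, hak1⟩
  -- the three digit conditions give both sides
  have mkL : dig p v m ≠ 0 → 2 ≤ dig p v (n + 1) → dig p v (k + 1) ≠ 0 →
      DownAdm p v (Finset.Icc m n)
        ∧ DownAdm p (vdownN p v (Finset.Icc m n)) (Finset.Icc (n + 1) k) := by
    intro ham han1 hak1
    have han1' : dig p v (n + 1) ≠ 0 := by omega
    obtain ⟨h2D, -, -, hatn1, habove⟩ := master hp2 hmn ham han1'
    refine ⟨(downAdm_Icc hmn).2 ⟨ham, han1'⟩, ?_⟩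
    rw [vdownN_eq hp2 _ h2D, downAdm_Icc hn1k, hatn1, habove (k + 1) (by omega)]
    exact ⟨by omega, hak1⟩
  have mkR : dig p v m ≠ 0 → 2 ≤ dig p v (n + 1) → dig p v (k + 1) ≠ 0 →
      DownAdm p v (Finset.Icc (n + 1) k)
        ∧ UpAdm p (vdownN p v (Finset.Icc (n + 1) k)) (Finset.Icc m n) := by
    intro ham han1 hak1
    have han1' : dig p v (n + 1) ≠ 0 := by omega
    obtain ⟨h2D', hbelow', hatm', -, -⟩ := master hp2 hn1k han1' hak1
    refine ⟨(downAdm_Icc hn1k).2 ⟨han1', hak1⟩, ?_⟩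
    rw [vdownN_eq hp2 _ h2D', upAdm_Icc hmn, hbelow' m (by omega), hatm']
    have := dig_lt hp2 v (n + 1)
    exact ⟨ham, by omega⟩
  constructor
  · constructor
    · intro h
      obtain ⟨h1, h2, h3⟩ := fwd h
      exact mkR h1 h2 h3
    · intro h
      obtain ⟨h1, h2, h3⟩ := bwd h
      exact mkL h1 h2 h3
  · intro h
    obtain ⟨ham, han1, hak1⟩ := fwd h
    clear h fwd bwd mkL mkR
    have han1' : dig p v (n + 1) ≠ 0 := by omega
    obtain ⟨h2D, -, -, hatn1, habove⟩ := master hp2 hmn ham han1'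
    obtain ⟨h2D', hbelow', -, -, -⟩ := master hp2 hn1k han1' hak1
    rw [vdownN_eq hp2 _ h2D, vdownN_eq hp2 _ h2D']
    have hint : vdown p (v - 2 * ∑ j ∈ Finset.Icc m n, dig p v j * p ^ j)
          (Finset.Icc (n + 1) k)
        = vup p (v - 2 * ∑ j ∈ Finset.Icc (n + 1) k, dig p v j * p ^ j)
          (Finset.Icc m n) := by
      rw [vdown_eq hp2, vup_eq hp2 _ m n hmn]
      have hsum1 : ∑ i ∈ Finset.Icc (n + 1) k,
            (dig p (v - 2 * ∑ j ∈ Finset.Icc m n, dig p v j * p ^ j) i : ℤ) * (p : ℤ) ^ i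
          = ∑ i ∈ Finset.Icc (n + 1) k, (dig p v i : ℤ) * (p : ℤ) ^ i - (p : ℤ) ^ (n + 1) := by
        have hstep : ∀ i ∈ Finset.Icc (n + 1) k,
            (dig p (v - 2 * ∑ j ∈ Finset.Icc m n, dig p v j * p ^ j) i : ℤ) * (p : ℤ) ^ i
            = (dig p v i : ℤ) * (p : ℤ) ^ i
              + (if i = n + 1 then -((p : ℤ) ^ (n + 1)) else 0) := by
          intro i hi'
          rw [Finset.mem_Icc] at hi'
          by_cases hcase : i = n + 1
          · subst hcase
            rw [hatn1, if_pos rfl, Nat.cast_sub (by omega)]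
            push_cast
            ring
          · rw [habove i (by omega), if_neg hcase]
            ring
        rw [Finset.sum_congr rfl hstep, Finset.sum_add_distrib,
          Finset.sum_ite_eq' _ (n + 1) (fun _ => -((p : ℤ) ^ (n + 1))),
          if_pos (Finset.mem_Icc.2 ⟨le_rfl, hn1k⟩)]
        ring
      have hsum2 : ∑ i ∈ Finset.Icc m n,
            (dig p (v - 2 * ∑ j ∈ Finset.Icc (n + 1) k, dig p v j * p ^ j) i : ℤ) * (p : ℤ) ^ i
          = ∑ i ∈ Finset.Icc m n, (dig p v i : ℤ) * (p : ℤ) ^ i := by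
        refine Finset.sum_congr rfl fun i hi' => ?_
        rw [Finset.mem_Icc] at hi'
        rw [hbelow' i (by omega)]
      have hWcast : ((v - 2 * ∑ j ∈ Finset.Icc m n, dig p v j * p ^ j : ℕ) : ℤ)
          = (v : ℤ) - 2 * ∑ i ∈ Finset.Icc m n, (dig p v i : ℤ) * (p : ℤ) ^ i := by
        rw [Nat.cast_sub h2D]
        push_cast
        ring
      have hUcast : ((v - 2 * ∑ j ∈ Finset.Icc (n + 1) k, dig p v j * p ^ j : ℕ) : ℤ)
          = (v : ℤ) - 2 * ∑ i ∈ Finset.Icc (n + 1) k, (dig p v i : ℤ) * (p : ℤ) ^ i := by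
        rw [Nat.cast_sub h2D']
        push_cast
        ring
      rw [hsum1, hsum2, hWcast, hUcast]
      ring
    exact congrArg Int.toNat hint


end SL2Tilt
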